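/- Let (G,𝓑,≤) be an ordered biased graph with G a complete graph. If every 1324-circuit of G is balanced, then every oscillating circuit of G is balanced. -/

import Mathlib

open SimpleGraph

namespace Paper

variable {V : Type*}

/-- The edge set of a walk, as a set of edges. -/
def walkEdges {G : SimpleGraph V} {x y : V} (p : G.Walk x y) : Set (Sym2 V) :=
  {e | e ∈ p.edges}

/-- `C` is a circuit of `G`, i.e. the edge set of a cycle of `G`. -/
def IsCircuit (G : SimpleGraph V) (C : Set (Sym2 V)) : Prop :=
  ∃ (v : V) (w : G.Walk v v), w.IsCycle ∧ C = walkEdges w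

/-- The set of vertices covered by a set of edges. -/
def circVerts (C : Set (Sym2 V)) : Set V := {v | ∃ e ∈ C, v ∈ e}

/-- An edge set is nonspanning if it misses some vertex. -/
def Nonspanning (C : Set (Sym2 V)) : Prop := circVerts C ≠ Set.univ

/-- Three pairwise edge-disjoint and internally vertex-disjoint `x`-`y` paths,
forming a theta subgraph. -/
def IsThetaConfig (G : SimpleGraph V) {x y : V} (p₁ p₂ p₃ : G.Walk x y) : Prop :=
  x ≠ y ∧ p₁.IsPath ∧ p₂.IsPath ∧ p₃.IsPath ∧
  (∀ e, e ∈ p₁.edges → e ∉ p₂.edges) ∧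
  (∀ e, e ∈ p₁.edges → e ∉ p₃.edges) ∧
  (∀ e, e ∈ p₂.edges → e ∉ p₃.edges) ∧
  (∀ v, v ∈ p₁.support → v ∈ p₂.support → v = x ∨ v = y) ∧
  (∀ v, v ∈ p₁.support → v ∈ p₃.support → v = x ∨ v = y) ∧
  (∀ v, v ∈ p₂.support → v ∈ p₃.support → v = x ∨ v = y)

/-- No theta subgraph of `G` contains exactly two circuits of `B`: the three
circuits of a theta subgraph are the unions of pairs of its three paths. -/
def ThetaProperty (G : SimpleGraph V) (B : Set (Set (Sym2 V))) : Prop :=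
  ∀ ⦃x y : V⦄ (p₁ p₂ p₃ : G.Walk x y), IsThetaConfig G p₁ p₂ p₃ →
    ¬ ((walkEdges p₁ ∪ walkEdges p₂ ∈ B ∧ walkEdges p₁ ∪ walkEdges p₃ ∈ B ∧
          walkEdges p₂ ∪ walkEdges p₃ ∉ B) ∨
       (walkEdges p₁ ∪ walkEdges p₂ ∈ B ∧ walkEdges p₁ ∪ walkEdges p₃ ∉ B ∧
          walkEdges p₂ ∪ walkEdges p₃ ∈ B) ∨
       (walkEdges p₁ ∪ walkEdges p₂ ∉ B ∧ walkEdges p₁ ∪ walkEdges p₃ ∈ B ∧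
          walkEdges p₂ ∪ walkEdges p₃ ∈ B))

/-- `(G, B)` is a biased graph. -/
def IsBiased (G : SimpleGraph V) (B : Set (Set (Sym2 V))) : Prop :=
  (∀ C ∈ B, IsCircuit G C) ∧ ThetaProperty G B

/-- The subgraph of `G` induced on the vertex set `X` (kept on the same vertex type). -/
def inducedOn (G : SimpleGraph V) (X : Set V) : SimpleGraph V where
  Adj u v := G.Adj u v ∧ u ∈ X ∧ v ∈ X
  symm := ⟨fun u v h => ⟨h.1.symm, h.2.2, h.2.1⟩⟩
  loopless := ⟨fun u h => G.loopless.1 u h.1⟩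

/-- The gain of a walk with respect to a gain function `γ` (an antisymmetric
function recording an orientation together with a group labelling). -/
def walkGain {Γ : Type*} [Group Γ] (γ : V → V → Γ) {G : SimpleGraph V}
    {x y : V} (p : G.Walk x y) : Γ :=
  (p.darts.map fun d => γ d.toProd.1 d.toProd.2).prod

/-- `(G, B)` arises from a `Γ`-labelled graph: some orientation and `Γ`-labelling of `G`
(encoded as an antisymmetric gain function) whose balanced circuits are exactly `B`. -/
def ArisesFrom (G : SimpleGraph V) (B : Set (Set (Sym2 V))) (Γ : Type*) [Group Γ] : Prop :=
  ∃ γ : V → V → Γ, (∀ u v, γ u v * γ v u = 1) ∧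
    ∀ (v : V) (w : G.Walk v v), w.IsCycle → (walkEdges w ∈ B ↔ walkGain γ w = 1)

/-- `(G, B)` arises from a `Γ`-labelled graph for some finite cyclic group `Γ`. -/
def ArisesFromFiniteCyclic (G : SimpleGraph V) (B : Set (Set (Sym2 V))) : Prop :=
  ∃ (Γ : Type) (instΓ : Group Γ), Finite Γ ∧ (letI := instΓ; IsCyclic Γ ∧ ArisesFrom G B Γ)

/-- The edge set of the cycle visiting the entries of the list `L` in cyclic order. -/
def cycEdges (L : List V) : Set (Sym2 V) :=
  {e | ∃ i : Fin L.length,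
    e = s(L.get i, L.get ⟨(i.val + 1) % L.length, Nat.mod_lt _ i.pos⟩)}

section Ordered

variable [LinearOrder V]

/-- The edge set `{v₁v₂, v₂v₃, v₃v₄, v₄v₁}` of a 4-circuit. -/
def Circ4 (v₁ v₂ v₃ v₄ : V) : Set (Sym2 V) := {s(v₁, v₂), s(v₂, v₃), s(v₃, v₄), s(v₄, v₁)}

/-- A 1324-circuit: the canonical ordering `v₁,v₂,v₃,v₄` satisfies `v₁<v₃<v₂<v₄`. -/
def Is1324 (C : Set (Sym2 V)) : Prop :=
  ∃ v₁ v₂ v₃ v₄ : V, v₁ < v₃ ∧ v₃ < v₂ ∧ v₂ < v₄ ∧ C = Circ4 v₁ v₂ v₃ v₄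

/-- A 1243-circuit: the canonical ordering `v₁,v₂,v₃,v₄` satisfies `v₁<v₂<v₄<v₃`. -/
def Is1243 (C : Set (Sym2 V)) : Prop :=
  ∃ v₁ v₂ v₃ v₄ : V, v₁ < v₂ ∧ v₂ < v₄ ∧ v₄ < v₃ ∧ C = Circ4 v₁ v₂ v₃ v₄

/-- A circuit is oscillating if every vertex is either below both of its neighbours
in the circuit or above both of them. -/
def Oscillating (C : Set (Sym2 V)) : Prop :=
  ∀ ⦃v a b : V⦄, s(v, a) ∈ C → s(v, b) ∈ C → a ≠ b → (v < a ∧ v < b) ∨ (a < v ∧ b < v)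

/-- The number of increasing steps of a walk minus the number of decreasing steps;
for a cycle walk `w` this is `δ₀` of the corresponding circuit, and `(walkDelta w).natAbs`
is the parameter `δ`. -/
def walkDelta {G : SimpleGraph V} {x y : V} (p : G.Walk x y) : ℤ :=
  ((p.darts.filter fun d => d.toProd.1 < d.toProd.2).length : ℤ) -
  ((p.darts.filter fun d => d.toProd.2 < d.toProd.1).length : ℤ)

/-- The gain of a walk with respect to the edge labelling `γ` and the orientation of
the complete graph in which each edge is oriented from its smaller end to its larger end. -/
def upGain {Γ : Type*} [Group Γ] (γ : Sym2 V → Γ) {G : SimpleGraph V}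
    {x y : V} (p : G.Walk x y) : Γ :=
  (p.darts.map fun d =>
    if d.toProd.1 < d.toProd.2 then γ s(d.toProd.1, d.toProd.2)
    else (γ s(d.toProd.1, d.toProd.2))⁻¹).prod

/-- `T` is the edge set of a theta subgraph of `G`. -/
def IsTheta (G : SimpleGraph V) (T : Set (Sym2 V)) : Prop :=
  ∃ (x y : V) (p₁ p₂ p₃ : G.Walk x y), IsThetaConfig G p₁ p₂ p₃ ∧
    T = walkEdges p₁ ∪ walkEdges p₂ ∪ walkEdges p₃

/-- Adjacency in the graph `Ω(G)`: a theta subgraph contains both circuits together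
with a 1243- or 1324-circuit. -/
def OmegaAdj (G : SimpleGraph V) (C₁ C₂ : Set (Sym2 V)) : Prop :=
  C₁ ≠ C₂ ∧ ∃ T, IsTheta G T ∧ C₁ ⊆ T ∧ C₂ ⊆ T ∧ ∃ D, (Is1243 D ∨ Is1324 D) ∧ D ⊆ T

/-- The graph `Ω(G)` on the nonspanning circuits of `G`. -/
def Omega (G : SimpleGraph V) :
    SimpleGraph {C : Set (Sym2 V) // IsCircuit G C ∧ Nonspanning C} where
  Adj C₁ C₂ := OmegaAdj G C₁.1 C₂.1
  symm := by
    constructor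
    rintro C₁ C₂ ⟨hne, T, hT, h1, h2, hD⟩
    exact ⟨hne.symm, T, hT, h2, h1, hD⟩
  loopless := by
    constructor
    rintro C ⟨hne, -⟩
    exact hne rfl

/-- Two circuits are similar if the order-preserving bijection between their vertex
sets carries one to the other. -/
def Similar (C₁ C₂ : Set (Sym2 V)) : Prop :=
  ∃ φ : V → V, Set.BijOn φ (circVerts C₁) (circVerts C₂) ∧
    StrictMonoOn φ (circVerts C₁) ∧ C₂ = Sym2.map φ '' C₁

end Ordered

/-- The 4-uniform Ramsey property for `N` with target sizes `a, b, c, d`. -/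
def HasRamsey4 (N a b c d : ℕ) : Prop :=
  ∀ χ : Finset (Fin N) → Fin 4, ∃ (i : Fin 4) (X : Finset (Fin N)),
    X.card = ![a, b, c, d] i ∧ ∀ Q ⊆ X, Q.card = 4 → χ Q = i

/-- The 4-colour Ramsey number for 4-uniform hypergraphs. -/
noncomputable def R4 (a b c d : ℕ) : ℕ := sInf {N | HasRamsey4 N a b c d}

end Paper

/-!
Rotate the circuit so that it starts at its minimum `v₁` and read it as `v₁ v₂ v₃ v₄ …`.
Oscillation forces `v₁ < v₃ < v₂` and `v₃ < v₄`, so `v₁ v₂ v₃ v₄` is a 1324-circuit. Unless the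
circuit is this 4-circuit, the chord `v₁ v₄` turns it into a theta subgraph whose two other
circuits are the 1324-circuit and the shorter circuit `v₁ v₄ …`, which is again oscillating
with minimum `v₁` (now `v₄` lies above both its neighbours). The first is balanced by hypothesis,
the second by induction on the length, so the theta property makes the original one balanced.
-/

namespace Paper

section Walks

variable {V : Type*} {G : SimpleGraph V}

@[simp] lemma walkEdges_nil {u : V} : walkEdges (Walk.nil : G.Walk u u) = ∅ := by
  ext; simp [walkEdges]

@[simp] lemma walkEdges_cons {u v w : V} (h : G.Adj u v) (p : G.Walk v w) :
    walkEdges (Walk.cons h p) = insert s(u, v) (walkEdges p) := by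
  ext; simp [walkEdges]

@[simp] lemma walkEdges_append {u v w : V} (p : G.Walk u v) (q : G.Walk v w) :
    walkEdges (p.append q) = walkEdges p ∪ walkEdges q := by
  ext; simp [walkEdges]

@[simp] lemma walkEdges_reverse {u v : V} (p : G.Walk u v) :
    walkEdges p.reverse = walkEdges p := by
  ext; simp [walkEdges]

lemma walkEdges_rotate [DecidableEq V] {u v : V} (c : G.Walk v v) (h : u ∈ c.support) :
    walkEdges (c.rotate u h) = walkEdges c :=
  Set.ext fun _ => (c.rotate_edges u h).mem_iff

lemma isThetaConfig_of_chord {x y : V} {p : G.Walk x y} {q : G.Walk y x}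
    (hc : (p.append q).IsCycle) (h : G.Adj x y) (hchord : s(x, y) ∉ (p.append q).edges) :
    IsThetaConfig G h.toWalk p q.reverse := by
  have hsupp := hc.support_nodup
  rw [Walk.tail_support_append, List.nodup_append'] at hsupp
  have hedges := hc.edges_nodup
  rw [Walk.edges_append, List.nodup_append'] at hedges
  rw [Walk.edges_append, List.mem_append, not_or] at hchord
  have hinner : ∀ v, v ∈ p.support → v ∈ q.support → v = x ∨ v = y := by
    intro v hp hq
    rw [← Walk.cons_tail_support] at hp hq
    grind [List.Disjoint]
  refine ⟨h.ne, h.isPath_toWalk, hc.isPath_of_append_left (Walk.not_nil_of_ne h.ne.symm),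
    (hc.isPath_of_append_right (Walk.not_nil_of_ne h.ne)).reverse, ?_, ?_, ?_, ?_, ?_, ?_⟩
  all_goals simp only [h.edges_toWalk, h.support_toWalk, Walk.edges_reverse,
    Walk.support_reverse, List.mem_reverse, List.mem_cons,
    List.not_mem_nil, or_false]
  · rintro e rfl; exact hchord.1
  · rintro e rfl; exact hchord.2
  · exact fun e hp hq => hedges.2.2 hp hq
  · intro v hv _; exact hv
  · intro v hv _; exact hv
  · exact hinner

lemma ThetaProperty.union_mem {B : Set (Set (Sym2 V))} (hB : ThetaProperty G B) {x y : V}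
    {p₁ p₂ p₃ : G.Walk x y} (hT : IsThetaConfig G p₁ p₂ p₃)
    (h₁₂ : walkEdges p₁ ∪ walkEdges p₂ ∈ B) (h₁₃ : walkEdges p₁ ∪ walkEdges p₃ ∈ B) :
    walkEdges p₂ ∪ walkEdges p₃ ∈ B := by
  by_contra h₂₃
  exact hB p₁ p₂ p₃ hT (Or.inl ⟨h₁₂, h₁₃, h₂₃⟩)

lemma IsCycle.exists_eq_cons_cons_cons {u : V} {w : G.Walk u u} (hw : w.IsCycle) :
    ∃ (a b c : V) (h₁ : G.Adj u a) (h₂ : G.Adj a b) (h₃ : G.Adj b c) (q : G.Walk c u),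
      w = .cons h₁ (.cons h₂ (.cons h₃ q)) := by
  match w, hw.three_le_length with
  | .cons h₁ (.cons h₂ (.cons h₃ q)), _ => exact ⟨_, _, _, h₁, h₂, h₃, q, rfl⟩

end Walks

section Ordered

variable {V : Type*} [LinearOrder V]

lemma Oscillating.mono {C D : Set (Sym2 V)} (hC : Oscillating C) (hD : D ⊆ C) : Oscillating D :=
  fun _ _ _ ha hb hab => hC (hD ha) (hD hb) hab

lemma Oscillating.lt_of_lt {C : Set (Sym2 V)} (hC : Oscillating C) {v a b : V}
    (ha : s(v, a) ∈ C) (hb : s(v, b) ∈ C) (hab : a ≠ b) (h : a < v) : b < v := by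
  rcases hC ha hb hab with ⟨h', -⟩ | ⟨-, h'⟩
  · exact absurd h h'.asymm
  · exact h'

lemma Oscillating.lt_of_gt {C : Set (Sym2 V)} (hC : Oscillating C) {v a b : V}
    (ha : s(v, a) ∈ C) (hb : s(v, b) ∈ C) (hab : a ≠ b) (h : v < a) : v < b := by
  rcases hC ha hb hab with ⟨-, h'⟩ | ⟨h', -⟩
  · exact h'
  · exact absurd h h'.asymm

lemma Oscillating.insert_of_lt {D : Set (Sym2 V)} (hD : Oscillating D) {m t : V} (hmt : m < t)
    (hm : ∀ a, s(m, a) ∈ D → m < a) (ht : ∀ a, s(t, a) ∈ D → a < t) :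
    Oscillating (insert s(m, t) D) := by
  have hmem : ∀ {v a}, s(v, a) ∈ insert s(m, t) D →
      (v = m ∧ a = t) ∨ (v = t ∧ a = m) ∨ s(v, a) ∈ D := by
    simp only [Set.mem_insert_iff, Sym2.eq_iff]
    tauto
  intro v a b ha hb hab
  rcases hmem ha with ⟨rfl, rfl⟩ | ⟨rfl, rfl⟩ | ha <;>
    rcases hmem hb with ⟨hv, rfl⟩ | ⟨hv, rfl⟩ | hb
  all_goals first
    | exact hD ha hb hab
    | grind

lemma is1324_circ4 {v₁ v₂ v₃ v₄ : V} (h₁₃ : v₁ < v₃) (h₃₂ : v₃ < v₂) (h₃₄ : v₃ < v₄)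
    (h₂₄ : v₂ ≠ v₄) : Is1324 (Circ4 v₁ v₂ v₃ v₄) := by
  rcases h₂₄.lt_or_gt with h | h
  · exact ⟨v₁, v₂, v₃, v₄, h₁₃, h₃₂, h, rfl⟩
  · refine ⟨v₁, v₄, v₃, v₂, h₁₃, h₃₄, h, ?_⟩
    simp only [Circ4, Sym2.eq_swap (a := v₁), Sym2.eq_swap (a := v₃)]
    grind

theorem mem_of_isCycle_of_oscillating {B : Set (Set (Sym2 V))}
    (hθ : ThetaProperty (completeGraph V) B) (h1324 : ∀ C : Set (Sym2 V), Is1324 C → C ∈ B)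
    {v₁ : V} (w : (completeGraph V).Walk v₁ v₁) (hw : w.IsCycle)
    (hmin : ∀ x ∈ w.support, v₁ ≤ x) (hosc : Oscillating (walkEdges w)) :
    walkEdges w ∈ B := by
  induction hn : w.length using Nat.strong_induction_on generalizing v₁ w with
  | _ n ih =>
  obtain ⟨v₂, v₃, v₄, h₁, h₂, h₃, q, rfl⟩ := IsCycle.exists_eq_cons_cons_cons hw
  have hnd : (v₂ :: v₃ :: q.support).Nodup := by simpa using hw.support_nodup
  simp only [List.nodup_cons, List.mem_cons, not_or] at hnd
  obtain ⟨⟨-, hv₂q⟩, hv₃q, hq⟩ := hnd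
  have hv₃₁ : v₃ ≠ v₁ := fun h => hv₃q (h ▸ q.end_mem_support)
  have hv₂₄ : v₂ ≠ v₄ := fun h => hv₂q (h ▸ q.start_mem_support)
  have hqw : walkEdges q ⊆ walkEdges (Walk.cons h₁ (Walk.cons h₂ (Walk.cons h₃ q))) :=
    fun e he => by simp [he]
  have h₁₂ : v₁ < v₂ := (hmin v₂ (by simp)).lt_of_ne h₁.ne
  have h₁₃ : v₁ < v₃ := (hmin v₃ (by simp)).lt_of_ne hv₃₁.symm
  have h₃₂ : v₃ < v₂ := hosc.lt_of_lt (a := v₁) (by simp [Sym2.eq_swap]) (by simp) hv₃₁.symm h₁₂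
  have h₃₄ : v₃ < v₄ := hosc.lt_of_gt (a := v₂) (by simp [Sym2.eq_swap]) (by simp) hv₂₄ h₃₂
  have h₁₄ : v₁ < v₄ := h₁₃.trans h₃₄
  have hsquare : Circ4 v₁ v₂ v₃ v₄ ∈ B := h1324 _ (is1324_circ4 h₁₃ h₃₂ h₃₄ hv₂₄)
  by_cases hq₄₁ : s(v₄, v₁) ∈ q.edges
  · rw [(q.isPath_def.mpr hq).eq_adj_toWalk_of_mem_edges hq₄₁]
    simpa [Circ4] using hsquare
  have hq₁₄ : s(v₁, v₄) ∉ q.edges := by rwa [Sym2.eq_swap]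
  have hchord : s(v₁, v₄) ∉ (Walk.cons h₁ (Walk.cons h₂ (Walk.cons h₃ q))).edges := by
    simp [hq₁₄, h₁₂.ne, h₁₃.ne, h₁₄.ne, hv₂₄.symm]
  have hT := isThetaConfig_of_chord (p := Walk.cons h₁ (Walk.cons h₂ h₃.toWalk)) hw h₁₄.ne hchord
  have hshort : walkEdges (Walk.cons h₁₄.ne q) ∈ B := by
    refine ih (q.length + 1) (by simp [← hn]) _ ?_ ?_ ?_ rfl
    · exact (Walk.cons_isCycle_iff q _).mpr ⟨q.isPath_def.mpr hq, hq₁₄⟩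
    · simp only [Walk.support_cons, List.mem_cons, forall_eq_or_imp, le_refl, true_and]
      exact fun x hx => hmin x (by simp [hx])
    · rw [walkEdges_cons]
      refine (hosc.mono hqw).insert_of_lt h₁₄ (fun a ha => ?_) (fun a ha => ?_)
      · exact (hmin a (by simp [q.snd_mem_support_of_mem_edges ha])).lt_of_ne
          (q.adj_of_mem_edges ha).ne
      · exact hosc.lt_of_lt (a := v₃) (by simp [Sym2.eq_swap]) (hqw ha)
          (fun h => hv₃q (h ▸ q.snd_mem_support_of_mem_edges ha)) h₃₄
  have h₂₃ := hθ.union_mem hT (by simpa [Circ4, Sym2.eq_swap (a := v₄)] using hsquare)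
    (by simpa using hshort)
  rwa [walkEdges_reverse, ← walkEdges_append] at h₂₃

end Ordered

/-- in an ordered biased graph on a complete graph, if every 1324-circuit
is balanced then every oscillating circuit is balanced. -/
theorem statement16 {V : Type} [LinearOrder V] (B : Set (Set (Sym2 V)))
    (hB : IsBiased (completeGraph V) B)
    (h1324 : ∀ C : Set (Sym2 V), Is1324 C → C ∈ B) :
    ∀ C, IsCircuit (completeGraph V) C → Oscillating C → C ∈ B := by
  rintro C ⟨u, w, hw, rfl⟩ hosc
  obtain ⟨v, hv, hmin⟩ := w.support.toFinset.exists_min_image id ⟨u, by simp⟩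
  rw [List.mem_toFinset] at hv
  rw [← walkEdges_rotate w hv] at hosc ⊢
  exact mem_of_isCycle_of_oscillating hB.2 h1324 _ (hw.rotate hv)
    (fun x hx => hmin x (by simpa using (w.mem_support_rotate_iff v hv).mp hx)) hosc

end Paper
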